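/- arXiv:1204.6681 — 4 statements merged into one kernel-verified Lean document; each statement's English description precedes it below -/
import Mathlib

section
/- Let G be a finite simple graph with no isolatable vertex. If I is a maximum independent set in G (i.e., an independent set of cardinality α(G)) and x is any vertex of I, then the subgraph of G induced by the vertices outside the closed neighborhood of I \ {x} is a clique of order at least two. -/
/-- A set of vertices is independent if no two of its vertices are adjacent. -/
def IsIndep {V : Type*} (G : SimpleGraph V) (s : Set V) : Prop :=
  ∀ ⦃u⦄, u ∈ s → ∀ ⦃v⦄, v ∈ s → ¬ G.Adj u v

/-- A maximal independent set: independent and contained in no strictly larger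
independent set. -/
def MaxIndep {V : Type*} (G : SimpleGraph V) (s : Set V) : Prop :=
  IsIndep G s ∧ ∀ t : Set V, IsIndep G t → s ⊆ t → s = t

/-- A maximal independent set of the subgraph induced on `A`. -/
def MaxIndepOn {V : Type*} (G : SimpleGraph V) (A : Set V) (s : Set V) : Prop :=
  s ⊆ A ∧ IsIndep G s ∧ ∀ t : Set V, t ⊆ A → IsIndep G t → s ⊆ t → s = t

/-- A graph is well-covered if every maximal independent set has the same cardinality. -/
def WellCovered {V : Type*} (G : SimpleGraph V) : Prop :=
  ∀ s t : Set V, MaxIndep G s → MaxIndep G t → s.ncard = t.ncard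

/-- The closed neighborhood `N[S]`: the union of `S` with the set of all vertices
adjacent to some vertex of `S`. -/
def ClosedNbhd {V : Type*} (G : SimpleGraph V) (S : Set V) : Set V :=
  S ∪ {v | ∃ u ∈ S, G.Adj u v}

/-- A vertex `x` is isolatable if there is an independent set `M` such that `x` is the
unique vertex lying outside `N[M]`. -/
def Isolatable {V : Type*} (G : SimpleGraph V) (x : V) : Prop :=
  ∃ M : Set V, IsIndep G M ∧ (ClosedNbhd G M)ᶜ = {x}

/-!
Put `J = I \ {x}`, an independent set with `|J| = α(G) - 1`. Two non-adjacent vertices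
outside `N[J]` would extend `J` to an independent set of size `α(G) + 1`, so the vertices
outside `N[J]` form a clique. Since `I` is independent, `x` lies outside `N[J]`; if it were
the only such vertex, `J` would witness that `x` is isolatable.
-/

section Independence

variable {V : Type*} {G : SimpleGraph V}

theorem IsIndep.mono {s t : Set V} (ht : IsIndep G t) (hst : s ⊆ t) : IsIndep G s :=
  fun _ hu _ hv => ht (hst hu) (hst hv)

theorem notMem_closedNbhd_iff {S : Set V} {a : V} :
    a ∉ ClosedNbhd G S ↔ a ∉ S ∧ ∀ u ∈ S, ¬ G.Adj u a := by
  simp [ClosedNbhd]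

theorem IsIndep.insert_of_forall_not_adj {s : Set V} {a : V} (hs : IsIndep G s)
    (ha : ∀ u ∈ s, ¬ G.Adj u a) : IsIndep G (insert a s) := by
  rintro u (rfl | hu) v (rfl | hv) huv
  · exact G.loopless.irrefl _ huv
  · exact ha v hv huv.symm
  · exact ha u hu huv
  · exact hs hu hv huv

theorem IsIndep.mem_compl_closedNbhd_diff_singleton {I : Set V} (hI : IsIndep G I)
    {x : V} (hx : x ∈ I) : x ∈ (ClosedNbhd G (I \ {x}))ᶜ :=
  notMem_closedNbhd_iff.2 ⟨fun h => h.2 rfl, fun _ hu => hI hu.1 hx⟩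

theorem IsIndep.isClique_compl_closedNbhd {S : Set V} (hS : IsIndep G S) (hfin : S.Finite)
    (hbound : ∀ s : Set V, IsIndep G s → s.ncard ≤ S.ncard + 1) :
    G.IsClique (ClosedNbhd G S)ᶜ := by
  intro a ha b hb hab
  by_contra hnadj
  obtain ⟨haS, haN⟩ := notMem_closedNbhd_iff.1 ha
  obtain ⟨hbS, hbN⟩ := notMem_closedNbhd_iff.1 hb
  have hindep : IsIndep G (insert a (insert b S)) := by
    refine (hS.insert_of_forall_not_adj hbN).insert_of_forall_not_adj ?_
    rintro u (rfl | hu)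
    · exact fun h => hnadj h.symm
    · exact haN u hu
  have hcard : (insert a (insert b S)).ncard = S.ncard + 2 := by
    rw [Set.ncard_insert_of_notMem (by simp [haS, hab]) (hfin.insert b),
      Set.ncard_insert_of_notMem hbS hfin]
  have := hbound _ hindep
  omega

end Independence

/-- If `G` has no isolatable vertex, `I` is a maximum independent set and `x ∈ I`,
then the subgraph induced by the vertices outside `N[I \ {x}]` is a clique of order
at least two. -/
theorem stmt_0 {V : Type*} [Fintype V] (G : SimpleGraph V)
    (hno : ∀ x : V, ¬ Isolatable G x)
    (I : Set V) (hI : IsIndep G I)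
    (hmax : ∀ s : Set V, IsIndep G s → s.ncard ≤ I.ncard)
    (x : V) (hx : x ∈ I) :
    G.IsClique ((ClosedNbhd G (I \ {x}))ᶜ) ∧ 2 ≤ ((ClosedNbhd G (I \ {x}))ᶜ).ncard := by
  set J := I \ {x}
  have hJ : IsIndep G J := hI.mono Set.sdiff_subset
  have hJcard : J.ncard + 1 = I.ncard := Set.ncard_sdiff_singleton_add_one hx
  refine ⟨hJ.isClique_compl_closedNbhd J.toFinite (fun s hs => hJcard ▸ hmax s hs), ?_⟩
  by_contra hlt
  have hsub : ((ClosedNbhd G J)ᶜ).Subsingleton :=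
    Set.ncard_le_one_iff_subsingleton.1 (by omega)
  exact hno x ⟨J, hJ, hsub.eq_singleton_of_mem (hI.mem_compl_closedNbhd_diff_singleton hx)⟩
end

section
/- Let G and H be finite simple graphs. Suppose H is not well-covered and G has an isolatable vertex. Then the Cartesian product G □ H is not well-covered. -/
/-!
Fix maximal independent sets `B₁`, `B₂` of `H` and an independent set `M` of `G` with
`N[M] = V \ {x}`. Start from `M × B₁` and add a maximal independent set `P` of the vertices
outside `(M ∪ {x}) × W` not yet dominated by `M × B₁ ∪ {x} × B₂`. For `C = M × B₁ ∪ P`, the set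
`{x} × B₂ ∪ C` is a maximal independent set of `G □ H`, while `{x} × B₁ ∪ C` is still independent:
every vertex `(v, w)` with `v ∉ M ∪ {x}` is dominated through a neighbour of `v` in `M` when
`w ∈ B₁`, and otherwise lies in the region filled by `P`. If `G □ H` were well-covered, the latter
set would extend to a maximal independent set of the size of the former, so `|B₁| ≤ |B₂|`.
-/

section Independence

variable {V : Type*} {G : SimpleGraph V} {s t A : Set V}

lemma isIndep_union :
    IsIndep G (s ∪ t) ↔ IsIndep G s ∧ IsIndep G t ∧ ∀ u ∈ s, ∀ v ∈ t, ¬ G.Adj u v := by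
  refine ⟨fun h => ⟨fun u hu v hv => h (.inl hu) (.inl hv), fun u hu v hv => h (.inr hu) (.inr hv),
    fun u hu v hv => h (.inl hu) (.inr hv)⟩, ?_⟩
  rintro ⟨hs, ht, hst⟩ u (hu | hu) v (hv | hv)
  exacts [hs hu hv, hst u hu v hv, fun h => hst v hv u hu h.symm, ht hu hv]

lemma IsIndep.exists_maxIndepOn_superset [Finite V] (hsA : s ⊆ A) (hs : IsIndep G s) :
    ∃ t, s ⊆ t ∧ MaxIndepOn G A t := by
  obtain ⟨t, hst, ⟨htA, ht⟩, hmax⟩ :=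
    Finite.exists_le_maximal (p := fun t : Set V => t ⊆ A ∧ IsIndep G t) ⟨hsA, hs⟩
  exact ⟨t, hst, htA, ht, fun u huA hu htu => htu.antisymm (hmax ⟨huA, hu⟩ htu)⟩

lemma maxIndepOn_univ_iff : MaxIndepOn G Set.univ s ↔ MaxIndep G s := by
  simp [MaxIndepOn, MaxIndep]

lemma IsIndep.exists_maxIndep_superset [Finite V] (hs : IsIndep G s) :
    ∃ t, s ⊆ t ∧ MaxIndep G t := by
  simpa only [maxIndepOn_univ_iff] using hs.exists_maxIndepOn_superset (Set.subset_univ s)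

lemma MaxIndepOn.exists_adj (h : MaxIndepOn G A s) {p : V} (hpA : p ∈ A) (hps : p ∉ s) :
    ∃ q ∈ s, G.Adj q p := by
  by_contra! hp
  have hins : IsIndep G ({p} ∪ s) := by
    refine isIndep_union.2 ⟨?_, h.2.1, ?_⟩
    · rintro u rfl v rfl
      exact G.irrefl
    · rintro u rfl v hv huv
      exact hp v hv huv.symm
  rw [h.2.2 _ (Set.union_subset (by simpa) h.1) hins Set.subset_union_right] at hps
  exact hps (.inl rfl)

lemma MaxIndep.exists_adj (h : MaxIndep G s) {p : V} (hps : p ∉ s) : ∃ q ∈ s, G.Adj q p :=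
  (maxIndepOn_univ_iff.2 h).exists_adj (Set.mem_univ p) hps

lemma maxIndep_of_forall_exists_adj (hs : IsIndep G s) (hdom : ∀ p ∉ s, ∃ q ∈ s, G.Adj q p) :
    MaxIndep G s := by
  refine ⟨hs, fun t ht hst => hst.antisymm fun p hpt => ?_⟩
  by_contra hps
  obtain ⟨q, hqs, hqp⟩ := hdom p hps
  exact ht (hst hqs) hpt hqp

lemma WellCovered.ncard_le [Finite V] (hG : WellCovered G) (hs : IsIndep G s)
    (ht : MaxIndep G t) : s.ncard ≤ t.ncard := by
  obtain ⟨u, hsu, hu⟩ := hs.exists_maxIndep_superset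
  exact (Set.ncard_le_ncard hsu (Set.toFinite u)).trans (hG u t hu ht).le

end Independence

section BoxProduct

variable {V W : Type*} {G : SimpleGraph V} {H : SimpleGraph W} {x : V} {M : Set V}
  {B B₁ B₂ : Set W} {P : Set (V × W)}

lemma isIndep_empty : IsIndep G ∅ := fun _ h => h.elim

lemma isIndep_singleton : IsIndep G {x} := by
  rintro u rfl v rfl
  exact G.irrefl

lemma isIndep_boxProd_prod (hM : IsIndep G M) (hB : IsIndep H B) : IsIndep (G □ H) (M ×ˢ B) := by
  rintro u ⟨hu₁, hu₂⟩ v ⟨hv₁, hv₂⟩ (⟨huv, -⟩ | ⟨huv, -⟩)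
  exacts [hM hu₁ hv₁ huv, hB hu₂ hv₂ huv]

/-- When `N[M] = V \ {x}`: the vertices outside `(M ∪ {x}) × W` that are not dominated by
`M × B₁ ∪ {x} × B₂`. -/
def boxFillRegion (G : SimpleGraph V) (M : Set V) (x : V) (B₁ B₂ : Set W) : Set (V × W) :=
  {p | p.1 ∉ M ∧ p.1 ≠ x ∧ p.2 ∉ B₁ ∧ ¬(G.Adj x p.1 ∧ p.2 ∈ B₂)}

lemma isIndep_singleton_prod_union (hM : IsIndep G M) (hxM : x ∉ ClosedNbhd G M)
    (hB : IsIndep H B) (hB₁ : IsIndep H B₁) (hP : IsIndep (G □ H) P)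
    (hPR : P ⊆ boxFillRegion G M x B₁ B₂) (hPB : ∀ p ∈ P, G.Adj x p.1 → p.2 ∉ B) :
    IsIndep (G □ H) ({x} ×ˢ B ∪ (M ×ˢ B₁ ∪ P)) := by
  simp only [ClosedNbhd, Set.mem_union, Set.mem_ofPred_eq, not_or, not_exists, not_and] at hxM
  obtain ⟨hxM, hxN⟩ := hxM
  refine isIndep_union.2 ⟨isIndep_boxProd_prod isIndep_singleton hB,
    isIndep_union.2 ⟨isIndep_boxProd_prod hM hB₁, hP, ?_⟩, ?_⟩
  · rintro u ⟨hu₁, hu₂⟩ p hp (⟨-, hup⟩ | ⟨-, hup⟩)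
    exacts [(hPR hp).2.2.1 (hup ▸ hu₂), (hPR hp).1 (hup ▸ hu₁)]
  · rintro u ⟨hu₁, hu₂⟩ q (⟨hq₁, -⟩ | hq) (⟨huq, huq'⟩ | ⟨-, huq⟩) <;>
      rw [Set.mem_singleton_iff] at hu₁ <;> subst hu₁
    · exact hxN _ hq₁ huq.symm
    · exact hxM (huq ▸ hq₁)
    · exact hPB q hq huq (huq' ▸ hu₂)
    · exact (hPR hq).2.1 huq.symm

lemma maxIndep_singleton_prod_union (hM : IsIndep G M) (hMx : (ClosedNbhd G M)ᶜ = {x})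
    (hB₁ : MaxIndep H B₁) (hB₂ : MaxIndep H B₂)
    (hP : MaxIndepOn (G □ H) (boxFillRegion G M x B₁ B₂) P) :
    MaxIndep (G □ H) ({x} ×ˢ B₂ ∪ (M ×ˢ B₁ ∪ P)) := by
  have hN : ∀ v, v ∈ ClosedNbhd G M ↔ v ≠ x := fun v => by
    rw [← not_iff_not, ← Set.mem_compl_iff, hMx, Set.mem_singleton_iff, not_not]
  refine maxIndep_of_forall_exists_adj (isIndep_singleton_prod_union hM (fun h => (hN x).1 h rfl)
    hB₂.1 hB₁.1 hP.2.1 hP.1 fun p hp hxp hpB => (hP.1 hp).2.2.2 ⟨hxp, hpB⟩) ?_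
  rintro ⟨v, w⟩ hvw
  simp only [Set.mem_union, Set.mem_prod, Set.mem_singleton_iff, not_or, not_and] at hvw
  obtain ⟨hvwX, hvwY, hvwP⟩ := hvw
  by_cases hvM : v ∈ M
  · obtain ⟨b, hb, hbw⟩ := hB₁.exists_adj (hvwY hvM)
    exact ⟨(v, b), .inr (.inl ⟨hvM, hb⟩), .inr ⟨hbw, rfl⟩⟩
  by_cases hvx : v = x
  · obtain ⟨b, hb, hbw⟩ := hB₂.exists_adj (hvwX hvx)
    exact ⟨(v, b), .inl ⟨hvx, hb⟩, .inr ⟨hbw, rfl⟩⟩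
  obtain ⟨m, hm, hmv⟩ : ∃ m ∈ M, G.Adj m v := ((hN v).2 hvx).resolve_left hvM
  by_cases hwB₁ : w ∈ B₁
  · exact ⟨(m, w), .inr (.inl ⟨hm, hwB₁⟩), .inl ⟨hmv, rfl⟩⟩
  by_cases hxv : G.Adj x v ∧ w ∈ B₂
  · exact ⟨(x, w), .inl ⟨rfl, hxv.2⟩, .inl ⟨hxv.1, rfl⟩⟩
  obtain ⟨q, hq, hqv⟩ := hP.exists_adj ⟨hvM, hvx, hwB₁, hxv⟩ hvwP
  exact ⟨q, .inr (.inr hq), hqv⟩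

lemma ncard_singleton_prod_union [Finite V] [Finite W] {C : Set (V × W)}
    (hC : ∀ p ∈ C, p.1 ≠ x) : ({x} ×ˢ B ∪ C).ncard = B.ncard + C.ncard := by
  have hdisj : Disjoint ({x} ×ˢ B) C :=
    Set.disjoint_left.2 fun p ⟨hp, _⟩ hpC => hC p hpC hp
  rw [Set.ncard_union_eq hdisj, Set.singleton_prod,
    Set.ncard_image_of_injective _ (Prod.mk_right_injective x)]

lemma WellCovered.ncard_le_of_boxProd [Finite V] [Finite W] (hGH : WellCovered (G □ H))
    (hx : Isolatable G x) (hB₁ : MaxIndep H B₁) (hB₂ : MaxIndep H B₂) : B₁.ncard ≤ B₂.ncard := by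
  obtain ⟨M, hM, hMx⟩ := hx
  have hxM : x ∉ ClosedNbhd G M := fun h => (hMx ▸ rfl : x ∈ (ClosedNbhd G M)ᶜ) h
  obtain ⟨P, -, hP⟩ := (isIndep_empty (G := G □ H)).exists_maxIndepOn_superset
    (Set.empty_subset (boxFillRegion G M x B₁ B₂))
  have hCx : ∀ p ∈ M ×ˢ B₁ ∪ P, p.1 ≠ x := by
    rintro p (⟨hp, -⟩ | hp) rfl
    exacts [hxM (.inl hp), (hP.1 hp).2.1 rfl]
  have h₁ := isIndep_singleton_prod_union hM hxM hB₁.1 hB₁.1 hP.2.1 hP.1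
    fun p hp _ => (hP.1 hp).2.2.1
  have h₂ := maxIndep_singleton_prod_union hM hMx hB₁ hB₂ hP
  have := hGH.ncard_le h₁ h₂
  rwa [ncard_singleton_prod_union hCx, ncard_singleton_prod_union hCx, add_le_add_iff_right] at this

end BoxProduct

/-- If `H` is not well-covered and `G` has an isolatable vertex, then `G □ H` is not
well-covered. -/
theorem stmt_1 {V W : Type*} [Fintype V] [Fintype W]
    (G : SimpleGraph V) (H : SimpleGraph W)
    (hH : ¬ WellCovered H) (hG : ∃ x : V, Isolatable G x) :
    ¬ WellCovered (G.boxProd H) := by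
  intro hGH
  obtain ⟨x, hx⟩ := hG
  exact hH fun B₁ B₂ h₁ h₂ =>
    (hGH.ncard_le_of_boxProd hx h₁ h₂).antisymm (hGH.ncard_le_of_boxProd hx h₂ h₁)
end

section
/- Let G and H be finite simple graphs, both not well-covered, such that the Cartesian product G □ H is well-covered. Then neither G nor H has an isolatable vertex. -/
open Set

/-- Any independent subset of `A` extends to a maximal independent subset of `A`. -/
lemma exists_maxIndepOn {V : Type*} (G : SimpleGraph V) (A s : Set V)
    (hsA : s ⊆ A) (hs : IsIndep G s) : ∃ t, s ⊆ t ∧ MaxIndepOn G A t := by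
  obtain ⟨m, hsm, hm⟩ := zorn_subset_nonempty {t : Set V | t ⊆ A ∧ IsIndep G t}
    (fun c hc hchain _ => ⟨⋃₀ c, ⟨sUnion_subset fun t ht => (hc ht).1,
      fun u hu v hv hadj => by
        obtain ⟨t1, ht1, hu1⟩ := hu
        obtain ⟨t2, ht2, hv2⟩ := hv
        rcases hchain.total ht1 ht2 with h | h
        · exact (hc ht2).2 (h hu1) hv2 hadj
        · exact (hc ht1).2 hu1 (h hv2) hadj⟩,
      fun t ht => subset_sUnion_of_mem ht⟩) s ⟨hsA, hs⟩
  exact ⟨m, hsm, hm.prop.1, hm.prop.2, fun t htA htind hmt =>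
    hmt.antisymm (hm.2 ⟨htA, htind⟩ hmt)⟩

/-- Every maximal independent set is dominating. -/
lemma maxIndep_closedNbhd {V : Type*} {G : SimpleGraph V} {B : Set V}
    (hB : MaxIndep G B) (w : V) : w ∈ ClosedNbhd G B := by
  by_contra hw
  have hwB : w ∉ B := fun h => hw (Or.inl h)
  have hne : ∀ u ∈ B, ¬ G.Adj u w := fun u hu hadj => hw (Or.inr ⟨u, hu, hadj⟩)
  have hind : IsIndep G (insert w B) := by
    rintro u (rfl | hu) v (rfl | hv) hadj
    · exact G.irrefl hadj
    · exact hne v hv hadj.symm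
    · exact hne u hu hadj
    · exact hB.1 hu hv hadj
  have heq := hB.2 _ hind (subset_insert w B)
  exact hwB (by rw [heq]; exact mem_insert w B)

/-- If `C` is independent and `R` is a maximal independent subset of the complement
of the closed neighborhood of `C`, then `C ∪ R` is a maximal independent set. -/
lemma maxIndep_union {V : Type*} (G : SimpleGraph V) (C R : Set V) (hC : IsIndep G C)
    (hR : MaxIndepOn G (ClosedNbhd G C)ᶜ R) : MaxIndep G (C ∪ R) := by
  obtain ⟨hRA, hRind, hRmax⟩ := hR
  have hCR : ∀ u ∈ C, ∀ v ∈ R, ¬ G.Adj u v := by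
    intro u hu v hv hadj
    exact hRA hv (Or.inr ⟨u, hu, hadj⟩)
  constructor
  · rintro u (hu | hu) v (hv | hv) hadj
    · exact hC hu hv hadj
    · exact hCR u hu v hv hadj
    · exact hCR v hv u hu hadj.symm
    · exact hRind hu hv hadj
  · intro t ht hsub
    refine hsub.antisymm fun z hz => ?_
    by_cases hzN : z ∈ ClosedNbhd G C
    · rcases hzN with hzC | ⟨u, hu, hadj⟩
      · exact Or.inl hzC
      · exact (ht (hsub (Or.inl hu)) hz hadj).elim
    · have hins : insert z R ⊆ (ClosedNbhd G C)ᶜ := by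
        rintro w (rfl | hw)
        · exact hzN
        · exact hRA hw
      have hinsInd : IsIndep G (insert z R) := by
        rintro u (rfl | hu) v (rfl | hv) hadj
        · exact G.irrefl hadj
        · exact ht hz (hsub (Or.inr hv)) hadj
        · exact ht (hsub (Or.inr hu)) hz hadj
        · exact hRind hu hv hadj
      have heq := hRmax _ hins hinsInd (subset_insert z R)
      exact Or.inr (by rw [heq]; exact mem_insert z R)

lemma ncard_prod' {α β : Type*} (s : Set α) (t : Set β) :
    (s ×ˢ t).ncard = s.ncard * t.ncard := by
  rw [← Nat.card_coe_set_eq, ← Nat.card_coe_set_eq, ← Nat.card_coe_set_eq,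
    Nat.card_congr (Equiv.Set.prod s t), Nat.card_prod]

/-- Key lemma: if the box product is well-covered and `G` has an isolatable vertex,
then `H` is well-covered. -/
lemma key {V W : Type*} [Fintype V] [Fintype W] (G : SimpleGraph V) (H : SimpleGraph W)
    (hGH : WellCovered (G.boxProd H)) (x : V) (hx : Isolatable G x) :
    WellCovered H := by
  classical
  obtain ⟨M, hMind, hMc⟩ := hx
  have hxN : x ∉ ClosedNbhd G M := by
    have : x ∈ (ClosedNbhd G M)ᶜ := by rw [hMc]; exact rfl
    exact this
  have hxM : x ∉ M := fun h => hxN (Or.inl h)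
  have hxAdj : ∀ m ∈ M, ¬ G.Adj m x := fun m hm h => hxN (Or.inr ⟨m, hm, h⟩)
  have hdom : ∀ v, v ≠ x → v ∈ ClosedNbhd G M := by
    intro v hv
    by_contra h
    have hmem : v ∈ (ClosedNbhd G M)ᶜ := h
    rw [hMc] at hmem
    exact hv hmem
  have main : ∀ B1 B2 : Set W, MaxIndep H B1 → MaxIndep H B2 → B2.ncard ≤ B1.ncard := by
    intro B1 B2 hB1 hB2
    set P := G.boxProd H with hP
    set C : Set (V × W) := ({x} ×ˢ B1) ∪ (M ×ˢ B2) with hCdef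
    set C2 : Set (V × W) := (insert x M) ×ˢ B2 with hC2def
    have hCind : IsIndep P C := by
      rintro ⟨a, b⟩ hu ⟨c, d⟩ hv hadj
      rw [hP, SimpleGraph.boxProd_adj] at hadj
      rcases hu with ⟨ha, hb⟩ | ⟨ha, hb⟩ <;> rcases hv with ⟨hc, hd⟩ | ⟨hc, hd⟩
      · rcases ha with rfl; rcases hc with rfl
        rcases hadj with ⟨h, -⟩ | ⟨h, -⟩
        · exact G.irrefl h
        · exact hB1.1 hb hd h
      · rcases ha with rfl
        rcases hadj with ⟨h, -⟩ | ⟨-, h⟩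
        · exact hxAdj c hc h.symm
        · exact hxM (h ▸ hc)
      · rcases hc with rfl
        rcases hadj with ⟨h, -⟩ | ⟨-, h⟩
        · exact hxAdj a ha h
        · exact hxM (h ▸ ha)
      · rcases hadj with ⟨h, -⟩ | ⟨h, -⟩
        · exact hMind ha hc h
        · exact hB2.1 hb hd h
    have hC2ind : IsIndep P C2 := by
      rintro ⟨a, b⟩ ⟨ha, hb⟩ ⟨c, d⟩ ⟨hc, hd⟩ hadj
      rw [hP, SimpleGraph.boxProd_adj] at hadj
      rcases hadj with ⟨h, -⟩ | ⟨h, -⟩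
      · rcases ha with rfl | ha <;> rcases hc with rfl | hc
        · exact G.irrefl h
        · exact hxAdj c hc h.symm
        · exact hxAdj a ha h
        · exact hMind ha hc h
      · exact hB2.1 hb hd h
    have hN : ClosedNbhd P C2 ⊆ ClosedNbhd P C := by
      rintro ⟨v, w⟩ hz
      rcases hz with ⟨hv, hw⟩ | ⟨⟨u, b⟩, ⟨hu, hb⟩, hadj⟩
      · -- (v, w) ∈ C2
        rcases hv with hvx | hvM
        · rcases maxIndep_closedNbhd hB1 w with hw1 | ⟨b1, hb1, hadj1⟩
          · exact Or.inl (Or.inl ⟨hvx, hw1⟩)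
          · exact Or.inr ⟨(v, b1), Or.inl ⟨hvx, hb1⟩,
              SimpleGraph.boxProd_adj.mpr (Or.inr ⟨hadj1, rfl⟩)⟩
        · exact Or.inl (Or.inr ⟨hvM, hw⟩)
      · rw [hP, SimpleGraph.boxProd_adj] at hadj
        rcases hadj with ⟨huv, rfl⟩ | ⟨hbw, rfl⟩
        · -- same row: w = b ∈ B2, G.Adj u v
          rcases hu with hux | huM
          · have hvx : v ≠ x := by
              rintro rfl
              rw [hux] at huv
              exact G.irrefl huv
            rcases hdom v hvx with hvM | ⟨m, hm, hmv⟩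
            · exact Or.inl (Or.inr ⟨hvM, hb⟩)
            · exact Or.inr ⟨(m, b), Or.inr ⟨hm, hb⟩,
                SimpleGraph.boxProd_adj.mpr (Or.inl ⟨hmv, rfl⟩)⟩
          · exact Or.inr ⟨(u, b), Or.inr ⟨huM, hb⟩,
              SimpleGraph.boxProd_adj.mpr (Or.inl ⟨huv, rfl⟩)⟩
        · -- same column: v = u, H.Adj b w
          rcases hu with hux | huM
          · rcases maxIndep_closedNbhd hB1 w with hw1 | ⟨b1, hb1, hadj1⟩
            · exact Or.inl (Or.inl ⟨hux, hw1⟩)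
            · exact Or.inr ⟨(u, b1), Or.inl ⟨hux, hb1⟩,
                SimpleGraph.boxProd_adj.mpr (Or.inr ⟨hadj1, rfl⟩)⟩
          · exact Or.inr ⟨(u, b), Or.inr ⟨huM, hb⟩,
              SimpleGraph.boxProd_adj.mpr (Or.inr ⟨hbw, rfl⟩)⟩
    obtain ⟨R, -, hR⟩ := exists_maxIndepOn P (ClosedNbhd P C)ᶜ ∅ (empty_subset _)
      (fun u hu => absurd hu (notMem_empty u))
    have hRsub2 : R ⊆ (ClosedNbhd P C2)ᶜ := hR.1.trans (compl_subset_compl.mpr hN)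
    obtain ⟨Rp, hRRp, hRp⟩ := exists_maxIndepOn P (ClosedNbhd P C2)ᶜ R hRsub2 hR.2.1
    have hD1 := maxIndep_union P C R hCind hR
    have hD2 := maxIndep_union P C2 Rp hC2ind hRp
    have hsize := hGH _ _ hD1 hD2
    -- cardinality computations
    have hdisj1 : Disjoint C R :=
      disjoint_left.mpr fun a haC haR => hR.1 haR (Or.inl haC)
    have hdisj2 : Disjoint C2 Rp :=
      disjoint_left.mpr fun a haC haR => hRp.1 haR (Or.inl haC)
    have hdisjC : Disjoint ({x} ×ˢ B1) (M ×ˢ B2) := by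
      refine disjoint_left.mpr ?_
      rintro ⟨a, b⟩ ⟨ha, -⟩ ⟨ha', -⟩
      exact hxM (mem_singleton_iff.mp ha ▸ ha')
    have hC_card : C.ncard = B1.ncard + M.ncard * B2.ncard := by
      rw [hCdef, ncard_union_eq hdisjC (toFinite _) (toFinite _), ncard_prod', ncard_prod',
        ncard_singleton, one_mul]
    have hC2_card : C2.ncard = (M.ncard + 1) * B2.ncard := by
      rw [hC2def, ncard_prod', ncard_insert_of_notMem hxM (toFinite _)]
    have h1 : (C ∪ R).ncard = C.ncard + R.ncard :=
      ncard_union_eq hdisj1 (toFinite _) (toFinite _)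
    have h2 : (C2 ∪ Rp).ncard = C2.ncard + Rp.ncard :=
      ncard_union_eq hdisj2 (toFinite _) (toFinite _)
    have hRle : R.ncard ≤ Rp.ncard := ncard_le_ncard hRRp (toFinite _)
    rw [h1, h2, hC_card, hC2_card, add_one_mul] at hsize
    linarith
  intro s t hs ht
  exact le_antisymm (main t s ht hs) (main s t hs ht)

lemma maxIndep_swap {V W : Type*} (G : SimpleGraph V) (H : SimpleGraph W) (s : Set (W × V))
    (hs : MaxIndep (H.boxProd G) s) : MaxIndep (G.boxProd H) (Prod.swap '' s) := by
  have hadj1 : ∀ a b : W × V, (G.boxProd H).Adj a.swap b.swap ↔ (H.boxProd G).Adj a b := by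
    intro a b
    simp only [SimpleGraph.boxProd_adj, Prod.fst_swap, Prod.snd_swap]
    tauto
  have hadj2 : ∀ a b : V × W, (H.boxProd G).Adj a.swap b.swap ↔ (G.boxProd H).Adj a b := by
    intro a b
    simp only [SimpleGraph.boxProd_adj, Prod.fst_swap, Prod.snd_swap]
    tauto
  constructor
  · rintro u ⟨a, ha, rfl⟩ v ⟨b, hb, rfl⟩ h
    exact hs.1 ha hb ((hadj1 a b).mp h)
  · intro t ht hsub
    have h2 : s ⊆ Prod.swap '' t := fun a ha => ⟨a.swap, hsub ⟨a, ha, rfl⟩, Prod.swap_swap a⟩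
    have h3 : IsIndep (H.boxProd G) (Prod.swap '' t) := by
      rintro u ⟨a, ha, rfl⟩ v ⟨b, hb, rfl⟩ h
      exact ht ha hb ((hadj2 a b).mp h)
    have heq := hs.2 _ h3 h2
    rw [heq, Set.image_image]
    simp

lemma wellCovered_comm {V W : Type*} (G : SimpleGraph V) (H : SimpleGraph W)
    (h : WellCovered (G.boxProd H)) : WellCovered (H.boxProd G) := by
  intro s t hs ht
  have := h _ _ (maxIndep_swap G H s hs) (maxIndep_swap G H t ht)
  rwa [Set.ncard_image_of_injective _ Prod.swap_injective,
    Set.ncard_image_of_injective _ Prod.swap_injective] at this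

/-- If `G` and `H` are both not well-covered but `G □ H` is well-covered, then neither
`G` nor `H` has an isolatable vertex. -/
theorem stmt_2 {V W : Type*} [Fintype V] [Fintype W]
    (G : SimpleGraph V) (H : SimpleGraph W)
    (hG : ¬ WellCovered G) (hH : ¬ WellCovered H)
    (hGH : WellCovered (G.boxProd H)) :
    (∀ x : V, ¬ Isolatable G x) ∧ (∀ y : W, ¬ Isolatable H y) := by
  constructor
  · intro x hx
    exact hH (key G H hGH x hx)
  · intro y hy
    exact hG (key H G (wellCovered_comm G H hGH) y hy)
end

section
/- Let G and H be finite simple graphs such that neither G nor H has an isolatable vertex, and suppose the Cartesian product G □ H is well-covered. Then for every maximal independent set M of G there exists a maximal independent set N of G with M ∩ N = ∅, and likewise for every maximal independent set M of H there exists a maximal independent set N of H with M ∩ N = ∅. -/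
/-!
Let `M` be independent and let `D` be a maximal independent subset of the complement of `M`,
so `D` dominates `Mᶜ`. If `D` also dominates `M`, it is a maximal independent set of the
whole graph, disjoint from `M`. Otherwise pick `x ∈ M` outside `N[D]`: adding to `D` all the
other vertices of `M` outside `N[D]` gives an independent set whose closed neighborhood
misses exactly `x`, so `x` is isolatable. Hence in a graph without isolatable vertices
every independent set is disjoint from some maximal independent set.
-/

namespace IsIndep

variable {V : Type*} {G : SimpleGraph V} {s t : Set V}

theorem singleton (v : V) : IsIndep G {v} := by
  rintro _ rfl _ rfl
  exact G.irrefl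

theorem mono_s3 (hs : IsIndep G s) (hts : t ⊆ s) : IsIndep G t :=
  fun _ hu _ hv => hs (hts hu) (hts hv)

theorem union_of_disjoint_closedNbhd (hs : IsIndep G s) (ht : IsIndep G t)
    (hdisj : Disjoint t (ClosedNbhd G s)) : IsIndep G (s ∪ t) := by
  have hst : ∀ u ∈ s, ∀ v ∈ t, ¬ G.Adj u v := fun u hu v hv huv =>
    hdisj.notMem_of_mem_left hv (Or.inr ⟨u, hu, huv⟩)
  rintro u (hu | hu) v (hv | hv) huv
  · exact hs hu hv huv
  · exact hst u hu v hv huv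
  · exact hst v hv u hu huv.symm
  · exact ht hu hv huv

theorem notMem_closedNbhd (hs : IsIndep G s) (hts : t ⊆ s) {x : V} (hxs : x ∈ s)
    (hxt : x ∉ t) : x ∉ ClosedNbhd G t := by
  rintro (hx | ⟨u, hu, hux⟩)
  · exact hxt hx
  · exact hs (hts hu) hxs hux

theorem maxIndep_of_closedNbhd_eq_univ (hs : IsIndep G s) (hdom : ClosedNbhd G s = Set.univ) :
    MaxIndep G s := by
  refine ⟨hs, fun t ht hst => hst.antisymm fun v hv => ?_⟩
  rcases hdom.ge (Set.mem_univ v) with hvs | ⟨u, hu, huv⟩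
  · exact hvs
  · exact absurd huv (ht (hst hu) hv)

end IsIndep

section

variable {V : Type*} {G : SimpleGraph V}

theorem closedNbhd_union (s t : Set V) :
    ClosedNbhd G (s ∪ t) = ClosedNbhd G s ∪ ClosedNbhd G t := by
  ext v
  simp only [ClosedNbhd, Set.mem_union, Set.mem_ofPred_eq, or_and_right, exists_or]
  exact or_or_or_comm

theorem exists_maxIndepOn_s3 (G : SimpleGraph V) (A : Set V) : ∃ D, MaxIndepOn G A D := by
  obtain ⟨D, ⟨hDA, hD⟩, hDmax⟩ := zorn_subset {s | s ⊆ A ∧ IsIndep G s} fun c hc hchain => by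
    refine ⟨⋃₀ c, ⟨Set.sUnion_subset fun s hs => (hc hs).1, ?_⟩, fun s => Set.subset_sUnion_of_mem⟩
    rintro u ⟨s, hs, hus⟩ v ⟨t, ht, hvt⟩
    rcases hchain.total hs ht with hst | hts
    · exact (hc ht).2 (hst hus) hvt
    · exact (hc hs).2 hus (hts hvt)
  exact ⟨D, hDA, hD, fun t htA ht hDt => hDt.antisymm (hDmax ⟨htA, ht⟩ hDt)⟩

theorem MaxIndepOn.subset_closedNbhd {A D : Set V} (hD : MaxIndepOn G A D) :
    A ⊆ ClosedNbhd G D := by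
  intro v hvA
  by_contra hv
  have hvD : v ∉ D := fun h => hv (Or.inl h)
  have hindep : IsIndep G (D ∪ {v}) :=
    hD.2.1.union_of_disjoint_closedNbhd (.singleton v)
      (Set.disjoint_singleton_left.mpr hv)
  have := hD.2.2 _ (Set.union_subset hD.1 (Set.singleton_subset_iff.mpr hvA)) hindep
    Set.subset_union_left
  exact hvD (this ▸ Or.inr rfl)

theorem IsIndep.exists_maxIndep_disjoint (hiso : ∀ x, ¬ Isolatable G x) {M : Set V}
    (hM : IsIndep G M) : ∃ N, MaxIndep G N ∧ Disjoint M N := by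
  obtain ⟨D, hD⟩ := exists_maxIndepOn_s3 G Mᶜ
  have hDdom := hD.subset_closedNbhd
  set A := M \ ClosedNbhd G D
  rcases A.eq_empty_or_nonempty with hA | ⟨x, hxM, hxD⟩
  · refine ⟨D, hD.2.1.maxIndep_of_closedNbhd_eq_univ ?_,
      Set.subset_compl_iff_disjoint_left.mp hD.1⟩
    refine Set.eq_univ_of_forall fun v => ?_
    by_cases hv : v ∈ M
    · by_contra hvD
      exact hA.subset ⟨hv, hvD⟩
    · exact hDdom hv
  · refine absurd ⟨D ∪ (A \ {x}), ?_, ?_⟩ (hiso x)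
    · exact hD.2.1.union_of_disjoint_closedNbhd (hM.mono_s3 fun v hv => hv.1.1)
        (Set.disjoint_left.mpr fun v hv => hv.1.2)
    · ext v
      simp only [Set.mem_compl_iff, Set.mem_singleton_iff, closedNbhd_union, Set.mem_union,
        not_or]
      constructor
      · rintro ⟨hvD, hvA⟩
        have hvM : v ∈ M := by
          by_contra hvM
          exact hvD (hDdom hvM)
        by_contra hvx
        exact hvA (Or.inl ⟨⟨hvM, hvD⟩, hvx⟩)
      · rintro rfl
        exact ⟨hxD, hM.notMem_closedNbhd (fun v hv => hv.1.1) hxM fun h => h.2 rfl⟩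

end

theorem stmt_3_general {V W : Type*}
    (G : SimpleGraph V) (H : SimpleGraph W)
    (hGiso : ∀ x : V, ¬ Isolatable G x) (hHiso : ∀ y : W, ¬ Isolatable H y) :
    (∀ M : Set V, MaxIndep G M → ∃ N : Set V, MaxIndep G N ∧ M ∩ N = ∅) ∧
    (∀ M : Set W, MaxIndep H M → ∃ N : Set W, MaxIndep H N ∧ M ∩ N = ∅) := by
  exact ⟨fun M hM => (hM.1.exists_maxIndep_disjoint hGiso).imp fun _ h => ⟨h.1, h.2.inter_eq⟩,
    fun M hM => (hM.1.exists_maxIndep_disjoint hHiso).imp fun _ h => ⟨h.1, h.2.inter_eq⟩⟩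

/-- If neither `G` nor `H` has an isolatable vertex and `G □ H` is well-covered, then
every maximal independent set of `G` is disjoint from some maximal independent set of
`G`, and likewise for `H`. -/
theorem stmt_3 {V W : Type*} [Fintype V] [Fintype W]
    (G : SimpleGraph V) (H : SimpleGraph W)
    (hGiso : ∀ x : V, ¬ Isolatable G x) (hHiso : ∀ y : W, ¬ Isolatable H y)
    (hGH : WellCovered (G.boxProd H)) :
    (∀ M : Set V, MaxIndep G M → ∃ N : Set V, MaxIndep G N ∧ M ∩ N = ∅) ∧
    (∀ M : Set W, MaxIndep H M → ∃ N : Set W, MaxIndep H N ∧ M ∩ N = ∅) :=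
  stmt_3_general G H hGiso hHiso
end
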